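/- Every graded maximal A-submodule of a graded A-module M is a graded prime A-submodule. -/

import Mathlib

section GCWP

variable {G : Type*} [AddGroup G] [DecidableEq G]
variable {A : Type*} [Ring A] {M : Type*} [AddCommGroup M] [Module A M]

/-- A submodule is graded (homogeneous) if it is generated by its homogeneous elements. -/
def IsGrSub (ℳ : G → AddSubgroup M) (K : Submodule A M) : Prop :=
  K ≤ Submodule.span A ((K : Set M) ∩ {m | SetLike.IsHomogeneousElem ℳ m})

/-- `K` is a graded classical weakly prime submodule. -/
def IsGCWP (𝒜 : G → AddSubgroup A) (ℳ : G → AddSubgroup M) (K : Submodule A M) : Prop :=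
  K ≠ ⊤ ∧ IsGrSub ℳ K ∧
  ∀ x y : A, SetLike.IsHomogeneousElem 𝒜 x → SetLike.IsHomogeneousElem 𝒜 y →
    ∀ L : Submodule A M, IsGrSub ℳ L →
      (∃ a : A, ∃ l ∈ L, (x * a * y) • l ≠ 0) →
      (∀ a : A, ∀ l ∈ L, (x * a * y) • l ∈ K) →
      (∀ l ∈ L, x • l ∈ K) ∨ (∀ l ∈ L, y • l ∈ K)

/-- `K` is a graded classical prime submodule. -/
def IsGCP (𝒜 : G → AddSubgroup A) (ℳ : G → AddSubgroup M) (K : Submodule A M) : Prop :=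
  K ≠ ⊤ ∧ IsGrSub ℳ K ∧
  ∀ x y : A, SetLike.IsHomogeneousElem 𝒜 x → SetLike.IsHomogeneousElem 𝒜 y →
    ∀ L : Submodule A M, IsGrSub ℳ L →
      (∀ a : A, ∀ l ∈ L, (x * a * y) • l ∈ K) →
      (∀ l ∈ L, x • l ∈ K) ∨ (∀ l ∈ L, y • l ∈ K)

/-- `(x, y, L)` is a graded classical triple zero of `K`. -/
def TripleZero (K : Submodule A M) (x y : A) (L : Submodule A M) : Prop :=
  (∀ a : A, ∀ l ∈ L, (x * a * y) • l = 0) ∧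
    ¬ (∀ l ∈ L, x • l ∈ K) ∧ ¬ (∀ l ∈ L, y • l ∈ K)

/-- `L` is an `A_e`-submodule of `M_g` (as an additive subgroup of `M`). -/
def IsAeSub (𝒜 : G → AddSubgroup A) (ℳ : G → AddSubgroup M) (g : G) (L : AddSubgroup M) : Prop :=
  (L : Set M) ⊆ (ℳ g : Set M) ∧ ∀ a ∈ 𝒜 0, ∀ l ∈ L, a • l ∈ L

/-- `L` is a faithful `A_e`-module. -/
def AeFaithful (𝒜 : G → AddSubgroup A) (L : AddSubgroup M) : Prop :=
  ∀ a ∈ 𝒜 0, (∀ l ∈ L, a • l = 0) → a = 0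

/-- `I` is an ideal of `A_e` (as an additive subgroup of `A`). -/
def IsAeIdeal (𝒜 : G → AddSubgroup A) (I : AddSubgroup A) : Prop :=
  (I : Set A) ⊆ (𝒜 0 : Set A) ∧ ∀ a ∈ 𝒜 0, ∀ r ∈ I, a * r ∈ I ∧ r * a ∈ I

/-- `K` is a `g`-classical weakly prime submodule of `M`. -/
def IsgCWP (𝒜 : G → AddSubgroup A) (ℳ : G → AddSubgroup M) (g : G) (K : Submodule A M) :
    Prop :=
  IsGrSub ℳ K ∧ ¬ ((ℳ g : Set M) ⊆ (K : Set M)) ∧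
  ∀ x ∈ 𝒜 0, ∀ y ∈ 𝒜 0, ∀ L : AddSubgroup M, IsAeSub 𝒜 ℳ g L →
    (∃ a ∈ 𝒜 0, ∃ l ∈ L, (x * a * y) • l ≠ 0) →
    (∀ a ∈ 𝒜 0, ∀ l ∈ L, (x * a * y) • l ∈ K) →
    (∀ l ∈ L, x • l ∈ K) ∨ (∀ l ∈ L, y • l ∈ K)

/-- `P` is a weakly prime (proper) left ideal of `A_e`, given as a subset of `A`. -/
def IsWeaklyPrimeAe (𝒜 : G → AddSubgroup A) (P : Set A) : Prop :=
  P ⊆ (𝒜 0 : Set A) ∧ ¬ ((𝒜 0 : Set A) ⊆ P) ∧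
  (0 : A) ∈ P ∧ (∀ p ∈ P, ∀ q ∈ P, p + q ∈ P) ∧ (∀ p ∈ P, -p ∈ P) ∧
  (∀ a ∈ 𝒜 0, ∀ p ∈ P, a * p ∈ P) ∧
  ∀ I J : AddSubgroup A, IsAeIdeal 𝒜 I → IsAeIdeal 𝒜 J →
    (∃ i ∈ I, ∃ j ∈ J, i * j ≠ 0) → (∀ i ∈ I, ∀ j ∈ J, i * j ∈ P) →
    (I : Set A) ⊆ P ∨ (J : Set A) ⊆ P

end GCWP

section GW2A
variable {G : Type*} [AddGroup G] [DecidableEq G]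
variable {A : Type*} [Ring A] {M : Type*} [AddCommGroup M] [Module A M]

/-- `K` is a graded weakly 2-absorbing submodule. -/
def IsGW2A (𝒜 : G → AddSubgroup A) (ℳ : G → AddSubgroup M) (K : Submodule A M) : Prop :=
  K ≠ ⊤ ∧ IsGrSub ℳ K ∧
  ∀ x y : A, SetLike.IsHomogeneousElem 𝒜 x → SetLike.IsHomogeneousElem 𝒜 y →
    ∀ L : Submodule A M, IsGrSub ℳ L →
      (∃ a : A, ∃ l ∈ L, (x * a * y) • l ≠ 0) →
      (∀ a : A, ∀ l ∈ L, (x * a * y) • l ∈ K) →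
      (∀ l ∈ L, x • l ∈ K) ∨ (∀ l ∈ L, y • l ∈ K) ∨
        (∀ a : A, ∀ m : M, (x * a * y) • m ∈ K)

end GW2A

section GradedSubmodule

variable {G A M : Type*} [Ring A] [AddCommGroup M] [Module A M] {ℳ : G → AddSubgroup M}

theorem IsGrSub.mono_span {K L : Submodule A M} (hK : IsGrSub ℳ K) (hKL : K ≤ L) :
    K ≤ Submodule.span A ((L : Set M) ∩ {m | SetLike.IsHomogeneousElem ℳ m}) :=
  hK.trans (Submodule.span_mono (Set.inter_subset_inter_left _ hKL))

theorem IsGrSub.sup {K L : Submodule A M} (hK : IsGrSub ℳ K) (hL : IsGrSub ℳ L) :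
    IsGrSub ℳ (K ⊔ L) :=
  sup_le (hK.mono_span le_sup_left) (hL.mono_span le_sup_right)

end GradedSubmodule

theorem Submodule.smul_mem_of_sup_eq_top {R M : Type*} [Semiring R] [AddCommMonoid M] [Module R M]
    {K L : Submodule R M} (hKL : K ⊔ L = ⊤) {r : R} (hr : ∀ l ∈ L, r • l ∈ K) (m : M) :
    r • m ∈ K := by
  obtain ⟨k, hk, l, hl, rfl⟩ := Submodule.mem_sup.mp (hKL ▸ Submodule.mem_top : m ∈ K ⊔ L)
  rw [smul_add]
  exact K.add_mem (K.smul_mem r hk) (hr l hl)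

section Theorems

variable {G : Type*} [AddGroup G] [DecidableEq G]
variable {A : Type*} [Ring A] {M : Type*} [AddCommGroup M] [Module A M]
variable (𝒜 : G → AddSubgroup A) (ℳ : G → AddSubgroup M)
variable [SetLike.GradedMonoid 𝒜] [SetLike.GradedSMul 𝒜 ℳ]
variable [DirectSum.Decomposition 𝒜] [DirectSum.Decomposition ℳ]

theorem stmt17 (K : Submodule A M) (hKgr : IsGrSub ℳ K) (hKtop : K ≠ ⊤)
    (hmax : ∀ L : Submodule A M, IsGrSub ℳ L → K < L → L = ⊤) :
    ∀ I : Ideal A, IsGrSub 𝒜 I → ∀ L : Submodule A M, IsGrSub ℳ L →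
      (∀ r ∈ I, ∀ l ∈ L, r • l ∈ K) →
      L ≤ K ∨ (∀ r ∈ I, ∀ m : M, r • m ∈ K) := by
  intro I _ L hLgr hIL
  by_cases hLK : L ≤ K
  · exact Or.inl hLK
  · have hKL : K ⊔ L = ⊤ := hmax _ (hKgr.sup hLgr) (left_lt_sup.mpr hLK)
    exact Or.inr fun r hr => Submodule.smul_mem_of_sup_eq_top hKL (hIL r hr)

end Theorems
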